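/- Let g : ℝ → ℝ be continuous on [0,1] with g(0) = g(1). Then the variation of g on [0,1] (eVariationOn g (Set.Icc 0 1)) is at least 2·(sup of g over [0,1] − inf of g over [0,1]). -/

import Mathlib

/-!
Pick points `x, y` where `g` attains its maximum and minimum. Cutting `[0,1]` at `x` and `y`
splits the closed curve into three arcs; the middle one joins `g x` to `g y`, and since
`g 0 = g 1` the two outer arcs together also join `g y` to `g x`. Hence the variation is at least
`2 |g x - g y|`.
-/

open Set

namespace eVariationOn

variable {α E : Type*} [LinearOrder α] [PseudoEMetricSpace E]

theorem edist_add_edist_add_edist_le (f : α → E) {a b c d : α} (hab : a ≤ b) (hbc : b ≤ c)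
    (hcd : c ≤ d) :
    edist (f a) (f b) + edist (f b) (f c) + edist (f c) (f d) ≤ eVariationOn f (Icc a d) :=
  calc
    _ ≤ eVariationOn f (Icc a b) + eVariationOn f (Icc b c) + eVariationOn f (Icc c d) := by
      gcongr <;> apply edist_le <;> simp [*]
    _ ≤ eVariationOn f (Icc a b ∪ Icc b c) + eVariationOn f (Icc c d) := by
      gcongr
      exact add_le_union f fun x hx y hy => hx.2.trans hy.1
    _ ≤ eVariationOn f (Icc a b ∪ Icc b c ∪ Icc c d) :=
      add_le_union f fun x hx y hy => (hx.elim (fun h => h.2.trans hbc) (·.2)).trans hy.1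
    _ = eVariationOn f (Icc a d) := by
      rw [Icc_union_Icc_eq_Icc hab hbc, Icc_union_Icc_eq_Icc (hab.trans hbc) hcd]

theorem two_mul_edist_le_of_eq {f : α → E} {a d : α} (hf : f a = f d) {x y : α}
    (hx : x ∈ Icc a d) (hy : y ∈ Icc a d) :
    2 * edist (f x) (f y) ≤ eVariationOn f (Icc a d) := by
  wlog hxy : x ≤ y generalizing x y
  · rw [edist_comm]
    exact this hy hx (le_of_not_ge hxy)
  calc
    2 * edist (f x) (f y) ≤ edist (f x) (f a) + edist (f a) (f y) + edist (f x) (f y) := by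
      rw [two_mul]
      gcongr
      exact edist_triangle _ _ _
    _ = edist (f a) (f x) + edist (f x) (f y) + edist (f y) (f d) := by
      rw [← hf, edist_comm (f x), edist_comm (f a) (f y)]
      ring
    _ ≤ eVariationOn f (Icc a d) := edist_add_edist_add_edist_le f hx.1 hxy hy.2

end eVariationOn

theorem closed_curve_variation_ge_twice_oscillation
    (g : ℝ → ℝ) (hcont : ContinuousOn g (Set.Icc 0 1)) (hclosed : g 0 = g 1) :
    ENNReal.ofReal (2 * (sSup (g '' Set.Icc 0 1) - sInf (g '' Set.Icc 0 1))) ≤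
      eVariationOn g (Set.Icc 0 1) := by
  have hcompact : IsCompact (g '' Icc 0 1) := isCompact_Icc.image_of_continuousOn hcont
  have hne : (g '' Icc (0 : ℝ) 1).Nonempty := (nonempty_Icc.2 zero_le_one).image g
  obtain ⟨x, hx, hgx⟩ := hcompact.sSup_mem hne
  obtain ⟨y, hy, hgy⟩ := hcompact.sInf_mem hne
  calc
    ENNReal.ofReal (2 * (sSup (g '' Icc 0 1) - sInf (g '' Icc 0 1)))
        ≤ 2 * edist (g x) (g y) := by
      rw [← hgx, ← hgy, edist_dist, Real.dist_eq, ENNReal.ofReal_mul zero_le_two,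
        ENNReal.ofReal_ofNat]
      gcongr
      exact le_abs_self _
    _ ≤ eVariationOn g (Icc 0 1) := eVariationOn.two_mul_edist_le_of_eq hclosed hx hy
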